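/- Let Σ be a finite relational signature, K a finite set of constants, G a finite tabloid over Σ and K, and T the undirected unraveling of G from any node of G. Then guarded bisimilarity ∼_g has finite index on the set of guarded tuples of 𝔄(T): there are only finitely many ∼_g-equivalence classes of guarded tuples (tuples of pairwise distinct elements whose set of components is a guarded set) of the structure 𝔄(T). -/

import Mathlib

open FirstOrder

namespace GFPaper

variable {L : FirstOrder.Language} {M N : Type*} {K V : Type*}

/-! ### Guarded sets, guarded tuples, partial isomorphisms, guarded bisimulations -/

/-- A guarded set of a `Σ`-structure is a nonempty (finite) subset contained in the set of
components of some tuple belonging to some relation of the structure. -/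
def IsGuardedSet (SM : L.Structure M) (B : Set M) : Prop :=
  B.Nonempty ∧ ∃ (n : ℕ) (R : L.Relations n) (a : Fin n → M),
    SM.RelMap R a ∧ B ⊆ Set.range a

/-- A guarded tuple is a tuple of pairwise distinct elements whose set of components is
a guarded set. -/
def IsGuardedTuple (SM : L.Structure M) {k : ℕ} (a : Fin k → M) : Prop :=
  Function.Injective a ∧ IsGuardedSet SM (Set.range a)

/-- A partial isomorphism between two `Σ`-structures: an injective map between finite subsets
preserving and reflecting all atomic relations.  The function `toFun` is total, but only its
restriction to `dom` is meaningful. -/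
structure PartialIso (SM : L.Structure M) (SN : L.Structure N) where
  dom : Set M
  finite_dom : dom.Finite
  toFun : M → N
  injOn : Set.InjOn toFun dom
  rel_iff : ∀ {n : ℕ} (R : L.Relations n) (a : Fin n → M), (∀ i, a i ∈ dom) →
    (SM.RelMap R a ↔ SN.RelMap R (fun i => toFun (a i)))

/-- The range of a partial isomorphism. -/
def PartialIso.rng {SM : L.Structure M} {SN : L.Structure N} (α : PartialIso SM SN) : Set N :=
  α.toFun '' α.dom

/-- A guarded bisimulation between two `Σ`-structures: a nonempty family of partial
isomorphisms between finite subsets satisfying the back-and-forth conditions over guarded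
sets. -/
structure GuardedBisim (SM : L.Structure M) (SN : L.Structure N) where
  Z : Set (PartialIso SM SN)
  nonempty : Z.Nonempty
  forth : ∀ α ∈ Z, ∀ B₀ : Set M, IsGuardedSet SM B₀ →
    ∃ γ ∈ Z, B₀ ⊆ γ.dom ∧ ∀ x ∈ α.dom ∩ γ.dom, α.toFun x = γ.toFun x
  back : ∀ α ∈ Z, ∀ B₁ : Set N, IsGuardedSet SN B₁ →
    ∃ γ ∈ Z, B₁ ⊆ γ.rng ∧ ∀ x ∈ α.dom, ∀ y ∈ γ.dom, α.toFun x = γ.toFun y → x = y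

/-- `𝔄₀,ā ∼_g 𝔄₁,b̄` : some guarded bisimulation contains the map `ā ↦ b̄`. -/
def GBisimTuple (SM : L.Structure M) (SN : L.Structure N) {k : ℕ}
    (a : Fin k → M) (b : Fin k → N) : Prop :=
  ∃ (Z : GuardedBisim SM SN) (α : PartialIso SM SN), α ∈ Z.Z ∧
    α.dom = Set.range a ∧ ∀ i, α.toFun (a i) = b i

/-- Guarded bisimilarity has finite index on the guarded tuples of a structure:
there is a finite set of guarded tuples such that every guarded tuple is guarded bisimilar
to one of them. -/
def FiniteGBisimIndex (SM : L.Structure M) : Prop :=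
  ∃ S : Set (Σ k : ℕ, Fin k → M), S.Finite ∧
    ∀ ⦃k : ℕ⦄ (a : Fin k → M), IsGuardedTuple SM a →
      ∃ b : Fin k → M, (⟨k, b⟩ : Σ k : ℕ, Fin k → M) ∈ S ∧
        IsGuardedTuple SM b ∧ GBisimTuple SM SM a b

/-! ### Undirected unraveling and undirected bisimulation -/

/-- `t` extends `s` by one edge (i.e. `s` is obtained from `t` by deleting its last node). -/
def ExtendsBy (G : SimpleGraph V) (v₀ : V) (s t : Σ u : V, G.Walk v₀ u) : Prop :=
  ∃ h : G.Adj s.1 t.1, t.2 = s.2.concat h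

/-- The undirected unraveling of a graph `G` from a node `v₀`: nodes are the finite walks
of `G` starting at `v₀`, and edges join each walk of positive length to the walk obtained
by deleting its last node. -/
def unraveling (G : SimpleGraph V) (v₀ : V) : SimpleGraph (Σ u : V, G.Walk v₀ u) where
  Adj s t := ExtendsBy G v₀ s t ∨ ExtendsBy G v₀ t s
  symm := ⟨fun _ _ h => h.symm⟩
  loopless := ⟨fun s h => by
    rcases h with ⟨h, _⟩ | ⟨h, _⟩ <;> exact G.irrefl h⟩

/-- The projection sending a node of the unraveling (a walk) to its terminal node. -/
def unravelingProj (G : SimpleGraph V) (v₀ : V) : (Σ u : V, G.Walk v₀ u) → V :=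
  fun s => s.1

/-- An undirected bisimulation between node-labelled undirected graphs. -/
def IsUndirectedBisim {V₀ V₁ Λ : Type*} (G₀ : SimpleGraph V₀) (G₁ : SimpleGraph V₁)
    (ℓ₀ : V₀ → Λ) (ℓ₁ : V₁ → Λ) (Z : Set (V₀ × V₁)) : Prop :=
  ∀ p ∈ Z, ℓ₀ p.1 = ℓ₁ p.2 ∧
    (∀ w₀, G₀.Adj p.1 w₀ → ∃ w₁, G₁.Adj p.2 w₁ ∧ (w₀, w₁) ∈ Z) ∧
    (∀ w₁, G₁.Adj p.2 w₁ → ∃ w₀, G₀.Adj p.1 w₀ ∧ (w₀, w₁) ∈ Z)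

/-! ### Tabloids -/

/-- A tabloid over a relational signature `L` and a set `K` of constant names: an undirected
graph where every node `v` carries a set `consts v ⊆ K` of constants and an atomic type
over `consts v`, encoded as the collection `rel v` of atomic facts over `consts v`; the
types of adjacent nodes agree over their common constants. -/
structure Tabloid (L : FirstOrder.Language) (K : Type*) (V : Type*) where
  graph : SimpleGraph V
  consts : V → Set K
  rel : ∀ (_v : V) {n : ℕ}, L.Relations n → (Fin n → K) → Prop
  rel_mem : ∀ (v : V) {n : ℕ} (R : L.Relations n) (c : Fin n → K),
    rel v R c → ∀ i, c i ∈ consts v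
  compat : ∀ (v w : V), graph.Adj v w → ∀ {n : ℕ} (R : L.Relations n) (c : Fin n → K),
    (∀ i, c i ∈ consts v ∩ consts w) → (rel v R c ↔ rel w R c)

namespace Tabloid

variable (T : Tabloid L K V)

/-- The pairs `(v, c)` with `v` a node and `c` one of its constants. -/
def Pairs : Type _ := {q : V × K // q.2 ∈ T.consts q.1}

/-- The relation `(v,c) ≈ (v',c')` iff `c = c'` and `c` belongs to the constants of every
node on the (unique, when the tabloid is a tree) path connecting `v` and `v'`. -/
def keq (p q : T.Pairs) : Prop :=
  p.1.2 = q.1.2 ∧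
    ∀ w : T.graph.Walk p.1.1 q.1.1, w.IsPath → ∀ z ∈ w.support, p.1.2 ∈ T.consts z

/-- The set of nodes `v` witnessing simultaneously the classes `[v_i, c_i]`, i.e. such that
`c_i ∈ K_v` and `[v, c_i] = [v_i, c_i]` for all `i`. -/
def classSet {n : ℕ} (p : Fin n → T.Pairs) : Set V :=
  {v | ∀ i, ∃ h : (p i).1.2 ∈ T.consts v,
    Quot.mk T.keq ⟨((v, (p i).1.2) : V × K), h⟩ = Quot.mk T.keq (p i)}

/-- The structure `𝔄(T)` associated to a (tree) tabloid: the universe is the set of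
`≈`-classes `[v,c]`, and a tuple satisfies a relation iff some single node witnesses all
classes and its atomic type contains the corresponding fact. -/
def AT [L.IsRelational] : L.Structure (Quot T.keq) where
  funMap := fun f _ => isEmptyElim f
  RelMap := fun {n} R x =>
    ∃ (v : V) (c : Fin n → K) (h : ∀ i, c i ∈ T.consts v),
      (∀ i, Quot.mk T.keq ⟨((v, c i) : V × K), h i⟩ = x i) ∧ T.rel v R c

/-- The undirected unraveling of a tabloid from a node: the unraveling of the underlying
graph, each walk carrying the labels of its terminal node. -/
def unravel (v₀ : V) : Tabloid L K (Σ u : V, T.graph.Walk v₀ u) where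
  graph := unraveling T.graph v₀
  consts := fun s => T.consts s.1
  rel := fun s => T.rel s.1
  rel_mem := fun s _ R c h i => T.rel_mem s.1 R c h i
  compat := by
    rintro s t (⟨h, _⟩ | ⟨h, _⟩) n R c hc
    · exact T.compat s.1 t.1 h R c hc
    · exact (T.compat t.1 s.1 h R c (fun i => ⟨(hc i).2, (hc i).1⟩)).symm

/-- An isomorphism of a tabloid onto itself: a graph automorphism preserving both labels. -/
structure Auto where
  toEquiv : V ≃ V
  adj_iff : ∀ z z', T.graph.Adj z z' ↔ T.graph.Adj (toEquiv z) (toEquiv z')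
  consts_eq : ∀ z, T.consts (toEquiv z) = T.consts z
  rel_iff : ∀ (z : V) {n : ℕ} (R : L.Relations n) (c : Fin n → K),
    T.rel (toEquiv z) R c ↔ T.rel z R c

end Tabloid

/-! ### The tabloid built from a finite model -/

/-- `χ` is the graph of a function. -/
def IsFunGraph (χ : Set (M × K)) : Prop :=
  ∀ ⦃a b b'⦄, (a, b) ∈ χ → (a, b') ∈ χ → b = b'

/-- `χ` is the graph of an injective (partial) function. -/
def IsInjGraph (χ : Set (M × K)) : Prop :=
  ∀ ⦃a a' b⦄, (a, b) ∈ χ → (a', b) ∈ χ → a = a'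

/-- The vertices of the tabloid built from a structure: injections `χ : A → K` with `A`
a guarded set, encoded via their graphs. -/
def ChiVertex (SM : L.Structure M) (K : Type*) : Type _ :=
  {χ : Set (M × K) // IsFunGraph χ ∧ IsInjGraph χ ∧ IsGuardedSet SM {a | ∃ b, (a, b) ∈ χ}}

/-- The constants of the vertex `χ`: the range of `χ`. -/
def chiConsts {SM : L.Structure M} (χ : ChiVertex SM K) : Set K :=
  {b | ∃ a, (a, b) ∈ χ.1}

/-- The atomic type of the vertex `χ`: the image under `χ` of the atomic type of its
domain in the structure. -/
def chiRel {SM : L.Structure M} (χ : ChiVertex SM K) {n : ℕ}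
    (R : L.Relations n) (c : Fin n → K) : Prop :=
  ∃ a : Fin n → M, (∀ i, (a i, c i) ∈ χ.1) ∧ SM.RelMap R a

/-- Adjacency of vertices: `χ ∪ χ'` is an injective function (and `χ ≠ χ'`). -/
def chiAdj {SM : L.Structure M} (χ χ' : ChiVertex SM K) : Prop :=
  χ ≠ χ' ∧ IsFunGraph (χ.1 ∪ χ'.1) ∧ IsInjGraph (χ.1 ∪ χ'.1)

/-! ### The guarded fragment of first-order logic -/

/-- Formulas of the guarded fragment of first-order logic over a relational signature `L`,
with variables drawn from `ℕ`: atomic formulas (including equalities), Boolean connectives,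
and guarded quantification `∃ȳ (R(x̄ȳ) ∧ φ)` and `∀ȳ (R(x̄ȳ) → φ)`. -/
inductive GFormula (L : FirstOrder.Language) : Type _ where
  | equal : ℕ → ℕ → GFormula L
  | rel : ∀ {n : ℕ}, L.Relations n → (Fin n → ℕ) → GFormula L
  | not : GFormula L → GFormula L
  | and : GFormula L → GFormula L → GFormula L
  | or : GFormula L → GFormula L → GFormula L
  | exGuard : ∀ {n : ℕ}, L.Relations n → (Fin n → ℕ) → Set ℕ → GFormula L → GFormula L
  | allGuard : ∀ {n : ℕ}, L.Relations n → (Fin n → ℕ) → Set ℕ → GFormula L → GFormula L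

namespace GFormula

/-- The free variables of a formula. -/
def free : GFormula L → Set ℕ
  | equal i j => {i, j}
  | rel _ ts => Set.range ts
  | not φ => φ.free
  | and φ ψ => φ.free ∪ ψ.free
  | or φ ψ => φ.free ∪ ψ.free
  | exGuard _ ts ys φ => (Set.range ts ∪ φ.free) \ ys
  | allGuard _ ts ys φ => (Set.range ts ∪ φ.free) \ ys

/-- Well-formedness for the guarded fragment: in every guarded quantification
`∃ȳ (R(x̄ȳ) ∧ φ)` resp. `∀ȳ (R(x̄ȳ) → φ)` the guard atom contains all free variables
of `φ` as well as all quantified variables. -/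
def IsGF : GFormula L → Prop
  | equal _ _ => True
  | rel _ _ => True
  | not φ => φ.IsGF
  | and φ ψ => φ.IsGF ∧ ψ.IsGF
  | or φ ψ => φ.IsGF ∧ ψ.IsGF
  | exGuard _ ts ys φ => φ.free ⊆ Set.range ts ∧ ys ⊆ Set.range ts ∧ φ.IsGF
  | allGuard _ ts ys φ => φ.free ⊆ Set.range ts ∧ ys ⊆ Set.range ts ∧ φ.IsGF

/-- Satisfaction of a guarded formula in a structure under a variable assignment. -/
def Sat (SM : L.Structure M) : GFormula L → (ℕ → M) → Prop
  | equal i j, β => β i = β j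
  | rel R ts, β => SM.RelMap R (fun i => β (ts i))
  | not φ, β => ¬ Sat SM φ β
  | and φ ψ, β => Sat SM φ β ∧ Sat SM ψ β
  | or φ ψ, β => Sat SM φ β ∨ Sat SM ψ β
  | exGuard R ts ys φ, β => ∃ β' : ℕ → M, (∀ x ∉ ys, β' x = β x) ∧
      SM.RelMap R (fun i => β' (ts i)) ∧ Sat SM φ β'
  | allGuard R ts ys φ, β => ∀ β' : ℕ → M, (∀ x ∉ ys, β' x = β x) →
      SM.RelMap R (fun i => β' (ts i)) → Sat SM φ β'

/-- Every subformula of `φ` has at most `n` free variables. -/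
def WidthLE (n : ℕ) : GFormula L → Prop
  | equal i j => (({i, j} : Set ℕ)).ncard ≤ n
  | rel _ ts => (Set.range ts).ncard ≤ n
  | not φ => φ.WidthLE n
  | and φ ψ => (φ.free ∪ ψ.free).ncard ≤ n ∧ φ.WidthLE n ∧ ψ.WidthLE n
  | or φ ψ => (φ.free ∪ ψ.free).ncard ≤ n ∧ φ.WidthLE n ∧ ψ.WidthLE n
  | exGuard _ ts _ φ => (Set.range ts ∪ φ.free).ncard ≤ n ∧ φ.WidthLE n
  | allGuard _ ts _ φ => (Set.range ts ∪ φ.free).ncard ≤ n ∧ φ.WidthLE n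

end GFormula

/-! The unraveling is a tree whose node `s` carries the labels of its projection `s.1`. For
nodes `s`, `s'` with the same projection, `[s, c] ↦ [s', c]` is a partial isomorphism of `𝔄(T)`,
since atomic facts of `𝔄(T)` are facts of single nodes and `≈` only looks along tree paths. These
maps form a guarded bisimulation: a guarded set lies at a single node `v`, and lifting at `s'` the
projection of the path from `s` to `v` gives a node `v'` above `v.1` that is `≈`-connected to `s'`
exactly as `v` is to `s`. Hence every guarded tuple, lying at some node `v`, is guarded bisimilar
to its copy at a node chosen once and for all above `v.1`; there are finitely many such copies. -/

theorem finite_setOf_injective_tuples {M : Type*} {A : Set M} (hA : A.Finite) :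
    {p : Σ k, Fin k → M | Function.Injective p.2 ∧ Set.range p.2 ⊆ A}.Finite := by
  have := hA.to_subtype
  refine ((Set.finite_Iic A.ncard).biUnion fun k _ =>
    Set.finite_range fun f : Fin k → A => (⟨k, Subtype.val ∘ f⟩ : Σ k, Fin k → M)).subset ?_
  rintro ⟨k, b⟩ ⟨hb, hbA⟩
  refine Set.mem_biUnion (x := k) ?_ ⟨fun j => ⟨b j, hbA ⟨j, rfl⟩⟩, rfl⟩
  simpa [Set.ncard_range_of_injective hb] using Set.ncard_le_ncard hbA hA

theorem PartialIso.isGuardedTuple_comp {L : FirstOrder.Language} {M N : Type*}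
    {SM : L.Structure M} {SN : L.Structure N} (α : PartialIso SM SN) {k n : ℕ}
    {a : Fin k → M} {R : L.Relations n} {x : Fin n → M} (ha : IsGuardedTuple SM a)
    (hR : SM.RelMap R x) (hax : Set.range a ⊆ Set.range x) (hx : Set.range x ⊆ α.dom) :
    IsGuardedTuple SN (α.toFun ∘ a) := by
  refine ⟨fun j j' h => ha.1 (α.injOn (hx (hax ⟨j, rfl⟩)) (hx (hax ⟨j', rfl⟩)) h), ?_⟩
  rw [Set.range_comp]
  refine ⟨ha.2.1.image _, n, R, α.toFun ∘ x, (α.rel_iff R x fun i => hx ⟨i, rfl⟩).1 hR, ?_⟩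
  rw [Set.range_comp]
  exact Set.image_mono hax

open SimpleGraph

/-- On a cycle rotated to start at a vertex where `f` is maximal, the second and the
penultimate vertex are two distinct lower neighbours of that vertex. -/
theorem isAcyclic_of_unique_lower_neighbor {V : Type*} {G : SimpleGraph V} (f : V → ℕ)
    (hne : ∀ ⦃x y⦄, G.Adj x y → f x ≠ f y)
    (huniq : ∀ ⦃x y z⦄, G.Adj x y → G.Adj x z → f y < f x → f z < f x → y = z) :
    G.IsAcyclic := by
  classical
  intro u c hc
  obtain ⟨w, hw, hmax⟩ := c.support.toFinset.exists_max_image f ⟨u, by simp⟩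
  rw [List.mem_toFinset] at hw
  set c' := c.rotate w hw
  have hc' : c'.IsCycle := hc.rotate hw
  have hlower (i : ℕ) (hadj : G.Adj w (c'.getVert i)) : f (c'.getVert i) < f w :=
    (hmax _ <| List.mem_toFinset.2 <| (c.mem_support_rotate_iff w hw).1 <|
      c'.getVert_mem_support i).lt_of_ne (hne hadj).symm
  have hnil := hc'.not_nil
  exact hc'.snd_ne_penultimate <| huniq (Walk.adj_snd hnil) (Walk.adj_penultimate hnil).symm
    (hlower _ (Walk.adj_snd hnil)) (hlower _ (Walk.adj_penultimate hnil).symm)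

section Unraveling

variable {V : Type*} {Γ : SimpleGraph V} {v₀ : V}

theorem ExtendsBy.length_eq {s t : Σ u, Γ.Walk v₀ u} (h : ExtendsBy Γ v₀ s t) :
    t.2.length = s.2.length + 1 := by
  obtain ⟨h, ht⟩ := h
  rw [ht, Walk.length_concat]

theorem ExtendsBy.left_unique {s s' t : Σ u, Γ.Walk v₀ u} (h : ExtendsBy Γ v₀ s t)
    (h' : ExtendsBy Γ v₀ s' t) : s = s' := by
  obtain ⟨u, p⟩ := s
  obtain ⟨u', p'⟩ := s'
  obtain ⟨_, ht⟩ := h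
  obtain ⟨_, ht'⟩ := h'
  obtain ⟨hu, hp⟩ := Walk.concat_inj (ht.symm.trans ht')
  dsimp only at hu
  subst hu
  obtain rfl : p = p' := by simpa using hp
  rfl

theorem unraveling_isAcyclic : (unraveling Γ v₀).IsAcyclic := by
  refine isAcyclic_of_unique_lower_neighbor (fun s => s.2.length) ?_ ?_
  · rintro s t (h | h) <;> simp [h.length_eq]
  · rintro x y z (hy | hy) (hz | hz) hyx hzx <;>
      first
      | exact hy.left_unique hz
      | (simp only [hy.length_eq, hz.length_eq] at hyx hzx; omega)

theorem exists_unraveling_walk_lift :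
    ∀ (s : Σ u, Γ.Walk v₀ u) {x : V} (w : Γ.Walk s.1 x),
      ∃ p : (unraveling Γ v₀).Walk s ⟨x, s.2.append w⟩,
        p.support.map Sigma.fst = w.support ∧
        p.support.map (fun z => z.2.length) = List.range' s.2.length (w.length + 1)
  | s, _, .nil => ⟨Walk.nil.copy rfl (by rw [Walk.append_nil]), by simp⟩
  | s, _, .cons h w => by
    obtain ⟨p, hfst, hlen⟩ := exists_unraveling_walk_lift ⟨_, s.2.concat h⟩ w
    have hadj : (unraveling Γ v₀).Adj s ⟨_, s.2.concat h⟩ := Or.inl ⟨h, rfl⟩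
    refine ⟨.cons hadj (p.copy rfl (by rw [Walk.concat_append])), ?_, ?_⟩
    · rw [Walk.support_cons, Walk.support_copy, List.map_cons, hfst, Walk.support_cons]
    · rw [Walk.support_cons, Walk.support_copy, List.map_cons, hlen, Walk.length_concat,
        Walk.length_cons, List.range'_succ (s := s.2.length)]

theorem exists_isPath_unraveling_walk_lift (s : Σ u, Γ.Walk v₀ u) {x : V}
    (w : Γ.Walk s.1 x) :
    ∃ p : (unraveling Γ v₀).Walk s ⟨x, s.2.append w⟩,
      p.IsPath ∧ p.support.map Sigma.fst = w.support := by
  obtain ⟨p, hfst, hlen⟩ := exists_unraveling_walk_lift s w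
  exact ⟨p, (Walk.isPath_def _).2 <| List.Nodup.of_map _ (hlen ▸ List.nodup_range'), hfst⟩

theorem unraveling_connected : (unraveling Γ v₀).Connected := by
  have hroot (s : Σ u, Γ.Walk v₀ u) : (unraveling Γ v₀).Reachable ⟨v₀, .nil⟩ s :=
    ⟨(exists_unraveling_walk_lift ⟨v₀, .nil⟩ s.2).choose⟩
  have : Nonempty (Σ u, Γ.Walk v₀ u) := ⟨⟨v₀, .nil⟩⟩
  exact ⟨fun s t => (hroot s).symm.trans (hroot t)⟩

theorem unraveling_isTree : (unraveling Γ v₀).IsTree :=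
  ⟨unraveling_connected, unraveling_isAcyclic⟩

def unravelingHom : unraveling Γ v₀ →g Γ where
  toFun := unravelingProj Γ v₀
  map_rel' := by
    rintro s t (⟨h, -⟩ | ⟨h, -⟩)
    exacts [h, h.symm]

noncomputable def canonNode (s : Σ u, Γ.Walk v₀ u) : Σ u, Γ.Walk v₀ u :=
  ⟨s.1, (Nonempty.intro s.2).some⟩

theorem finite_range_canonNode [Finite V] :
    (Set.range (canonNode (Γ := Γ) (v₀ := v₀))).Finite := by
  refine Set.Finite.of_finite_image (Set.toFinite (Sigma.fst '' _)) ?_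
  rintro _ ⟨⟨u, p⟩, rfl⟩ _ ⟨⟨u', p'⟩, rfl⟩ (rfl : u = u')
  rfl

end Unraveling

namespace Tabloid

variable {L : FirstOrder.Language} {K V : Type*} (T : Tabloid L K V)

/-- The element `[v, c]` of `𝔄(T)`. -/
abbrev elem (v : V) (c : K) (h : c ∈ T.consts v) : Quot T.keq :=
  Quot.mk T.keq ⟨(v, c), h⟩

def constOf : Quot T.keq → K :=
  Quot.lift (fun p => p.1.2) fun _ _ h => h.1

@[simp]
theorem constOf_elem {v : V} {c : K} (h : c ∈ T.consts v) : T.constOf (T.elem v c h) = c := rfl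

def elemsAt (v : V) (C : Set K) : Set (Quot T.keq) :=
  {x | ∃ c ∈ C, ∃ h : c ∈ T.consts v, x = T.elem v c h}

theorem finite_elemsAt [Finite K] (v : V) (C : Set K) : (T.elemsAt v C).Finite :=
  (Set.finite_range fun c : T.consts v => T.elem v c c.2).subset <| by
    rintro _ ⟨c, -, h, rfl⟩
    exact ⟨⟨c, h⟩, rfl⟩

theorem elemsAt_image_constOf {v : V} {B : Set (Quot T.keq)}
    (hB : B ⊆ T.elemsAt v Set.univ) : T.elemsAt v (T.constOf '' B) = B := by
  ext x
  constructor
  · rintro ⟨_, ⟨y, hy, rfl⟩, h, rfl⟩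
    obtain ⟨c, -, hc, rfl⟩ := hB hy
    exact hy
  · intro hx
    obtain ⟨c, -, hc, rfl⟩ := hB hx
    exact ⟨c, ⟨_, hx, rfl⟩, hc, rfl⟩

open Classical in
noncomputable def moveTo (v : V) (x : Quot T.keq) : Quot T.keq :=
  if h : T.constOf x ∈ T.consts v then T.elem v _ h else x

theorem moveTo_elem {u v : V} {c : K} (hu : c ∈ T.consts u) (hv : c ∈ T.consts v) :
    T.moveTo v (T.elem u c hu) = T.elem v c hv := by
  simp [moveTo, hv]

theorem rel_iff_of_walk {u w : V} (p : T.graph.Walk u w) {n : ℕ} (R : L.Relations n)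
    (c : Fin n → K) (hc : ∀ z ∈ p.support, ∀ i, c i ∈ T.consts z) :
    T.rel u R c ↔ T.rel w R c := by
  induction p with
  | nil => rfl
  | cons hadj p ih =>
    exact (T.compat _ _ hadj R c fun i => ⟨hc _ (by simp) i, hc _ (by simp) i⟩).trans
      (ih fun z hz => hc z (by simp [hz]))

theorem keq_iff_of_isPath (hT : T.graph.IsAcyclic) {u v : V} {p : T.graph.Walk u v}
    (hp : p.IsPath) {c c' : K} (hc : c ∈ T.consts u) (hc' : c' ∈ T.consts v) :
    T.keq ⟨(u, c), hc⟩ ⟨(v, c'), hc'⟩ ↔ c = c' ∧ ∀ z ∈ p.support, c ∈ T.consts z := by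
  refine ⟨fun h => ⟨h.1, h.2 p hp⟩, fun ⟨hcc, hpc⟩ => ⟨hcc, fun w hw => ?_⟩⟩
  rwa [show w = p from
    congrArg Subtype.val ((hT.subsingleton_path u v).elim ⟨w, hw⟩ ⟨p, hp⟩)]

theorem keq_equivalence (hT : T.graph.IsTree) : Equivalence T.keq where
  refl := by
    rintro ⟨⟨u, c⟩, hc⟩
    refine ⟨rfl, fun w hw z hz => ?_⟩
    obtain rfl : w = .nil := congrArg Subtype.val (Path.loop_eq ⟨w, hw⟩)
    rw [Walk.support_nil, List.mem_singleton] at hz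
    exact hz ▸ hc
  symm := by
    rintro _ _ ⟨hcc, h⟩
    exact ⟨hcc.symm, fun w hw z hz => hcc ▸ h w.reverse hw.reverse z (by simpa using hz)⟩
  trans := by
    classical
    rintro ⟨⟨u, c⟩, hc⟩ ⟨⟨v, c'⟩, hc'⟩ ⟨⟨w, c''⟩, hc''⟩ h₁ h₂
    obtain ⟨p₁, hp₁⟩ := hT.1.preconnected.exists_isPath u v
    obtain ⟨p₂, hp₂⟩ := hT.1.preconnected.exists_isPath v w
    obtain ⟨rfl, hc₁⟩ := (T.keq_iff_of_isPath hT.2 hp₁ hc hc').1 h₁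
    obtain ⟨rfl, hc₂⟩ := (T.keq_iff_of_isPath hT.2 hp₂ hc' hc'').1 h₂
    refine (T.keq_iff_of_isPath hT.2 (p₁.append p₂).bypass_isPath hc hc'').2 ⟨rfl, ?_⟩
    intro z hz
    rcases (Walk.mem_support_append_iff _ _).1 (Walk.support_bypass_subset_support _ hz)
      with hz | hz
    exacts [hc₁ z hz, hc₂ z hz]

theorem elem_eq_elem_iff (hT : T.graph.IsTree) {u v : V} {p : T.graph.Walk u v}
    (hp : p.IsPath) {c c' : K} (hc : c ∈ T.consts u) (hc' : c' ∈ T.consts v) :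
    T.elem u c hc = T.elem v c' hc' ↔ c = c' ∧ ∀ z ∈ p.support, c ∈ T.consts z :=
  (Quot.eq.trans (T.keq_equivalence hT).eqvGen_iff).trans (T.keq_iff_of_isPath hT.2 hp hc hc')

variable [L.IsRelational]

theorem exists_elemsAt_of_relMap {n : ℕ} {R : L.Relations n} {x : Fin n → Quot T.keq}
    (hR : T.AT.RelMap R x) : ∃ v, Set.range x ⊆ T.elemsAt v Set.univ := by
  obtain ⟨v, c, hc, hx, -⟩ := hR
  exact ⟨v, by rintro _ ⟨i, rfl⟩; exact ⟨c i, trivial, hc i, (hx i).symm⟩⟩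

theorem relMap_elem_iff (hT : T.graph.IsTree) {n : ℕ} (R : L.Relations n) (v : V)
    (c : Fin n → K) (hc : ∀ i, c i ∈ T.consts v) :
    T.AT.RelMap R (fun i => T.elem v (c i) (hc i)) ↔ T.rel v R c := by
  refine ⟨fun ⟨w, d, hd, hdc, hrel⟩ => ?_, fun h => ⟨v, c, hc, fun _ => rfl, h⟩⟩
  obtain ⟨p, hp⟩ := hT.1.preconnected.exists_isPath w v
  have hpath i := (T.elem_eq_elem_iff hT hp (hd i) (hc i)).1 (hdc i)
  obtain rfl : d = c := funext fun i => (hpath i).1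
  exact (T.rel_iff_of_walk p R d fun z hz i => (hpath i).2 z hz).1 hrel

/-- The partial isomorphism `[s, c] ↦ [s', c]` (`c ∈ C`) between two equally labelled nodes. -/
noncomputable def nodeIso [Finite K] (hT : T.graph.IsTree) {s s' : V}
    (hK : T.consts s = T.consts s')
    (hrel : ∀ {n : ℕ} (R : L.Relations n) c, T.rel s R c ↔ T.rel s' R c) (C : Set K) :
    PartialIso T.AT T.AT where
  dom := T.elemsAt s C
  finite_dom := T.finite_elemsAt s C
  toFun := T.moveTo s'
  injOn := by
    rintro _ ⟨c, -, hc, rfl⟩ _ ⟨e, -, he, rfl⟩ h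
    rw [T.moveTo_elem hc (hK ▸ hc), T.moveTo_elem he (hK ▸ he)] at h
    obtain rfl : c = e := congrArg T.constOf h
    rfl
  rel_iff := by
    intro n R a ha
    choose c _ hc ha using ha
    obtain rfl : a = fun i => T.elem s (c i) (hc i) := funext ha
    simp only [T.moveTo_elem (hc _) (hK ▸ hc _)]
    rw [T.relMap_elem_iff hT, T.relMap_elem_iff hT]
    exact hrel R c

end Tabloid

section Unravel

variable {L : FirstOrder.Language} {K V : Type*} (G : Tabloid L K V) (v₀ : V)

theorem unravel_isTree : (G.unravel v₀).graph.IsTree :=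
  unraveling_isTree

theorem unravel_consts_congr {s s' : Σ u, G.graph.Walk v₀ u} (hss : s.1 = s'.1) :
    (G.unravel v₀).consts s = (G.unravel v₀).consts s' :=
  congrArg G.consts hss

theorem exists_mirror {s s' : Σ u, G.graph.Walk v₀ u} (hss : s.1 = s'.1)
    (v : Σ u, G.graph.Walk v₀ u) :
    ∃ v' : Σ u, G.graph.Walk v₀ u, v'.1 = v.1 ∧
      ∀ (c : K) (h₁ : c ∈ (G.unravel v₀).consts s) (h₂ : c ∈ (G.unravel v₀).consts v)
        (h₃ : c ∈ (G.unravel v₀).consts s') (h₄ : c ∈ (G.unravel v₀).consts v'),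
        (G.unravel v₀).elem s c h₁ = (G.unravel v₀).elem v c h₂ ↔
          (G.unravel v₀).elem s' c h₃ = (G.unravel v₀).elem v' c h₄ := by
  obtain ⟨p, hp⟩ :=
    (unraveling_isTree (Γ := G.graph) (v₀ := v₀)).1.preconnected.exists_isPath s v
  set w : G.graph.Walk s'.1 v.1 := (p.map unravelingHom).copy hss rfl
  obtain ⟨q, hq, hqs⟩ := exists_isPath_unraveling_walk_lift s' w
  have hsupp : q.support.map Sigma.fst = p.support.map Sigma.fst := by
    rw [hqs]
    exact (Walk.support_copy ..).trans (Walk.support_map ..)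
  refine ⟨⟨v.1, s'.2.append w⟩, rfl, fun c h₁ h₂ h₃ h₄ => ?_⟩
  refine ((G.unravel v₀).elem_eq_elem_iff (unravel_isTree G v₀) hp h₁ h₂).trans <|
    Iff.trans ?_ ((G.unravel v₀).elem_eq_elem_iff (unravel_isTree G v₀) hq h₃ h₄).symm
  refine and_congr_right fun _ => ?_
  have hmap (l : List (Σ u, G.graph.Walk v₀ u)) :
      (∀ z ∈ l, c ∈ G.consts z.1) ↔ ∀ y ∈ l.map Sigma.fst, c ∈ G.consts y :=
    (List.forall_mem_map (f := Sigma.fst) (P := fun y => c ∈ G.consts y)).symm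
  exact (hmap _).trans (hsupp ▸ hmap _).symm

variable [L.IsRelational] [Finite K]

noncomputable def unravelNodeIso {s s' : Σ u, G.graph.Walk v₀ u} (hss : s.1 = s'.1)
    (C : Set K) : PartialIso (G.unravel v₀).AT (G.unravel v₀).AT :=
  (G.unravel v₀).nodeIso (unravel_isTree G v₀) (unravel_consts_congr G v₀ hss)
    (fun R c => by dsimp only [Tabloid.unravel]; rw [hss]) C

noncomputable def unravelGuardedBisim :
    GuardedBisim (G.unravel v₀).AT (G.unravel v₀).AT where
  Z := {α | ∃ (s s' : Σ u, G.graph.Walk v₀ u) (hss : s.1 = s'.1) (C : Set K),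
    α = unravelNodeIso G v₀ hss C}
  nonempty := ⟨_, ⟨v₀, .nil⟩, ⟨v₀, .nil⟩, rfl, ∅, rfl⟩
  forth := by
    rintro _ ⟨s, s', hss, C, rfl⟩ B₀ ⟨-, n, R, x, hR, hB⟩
    obtain ⟨v, hxv⟩ := (G.unravel v₀).exists_elemsAt_of_relMap hR
    obtain ⟨v', hv', hmirror⟩ := exists_mirror G v₀ hss v
    refine ⟨unravelNodeIso G v₀ hv'.symm Set.univ, ⟨v, v', hv'.symm, _, rfl⟩,
      hB.trans hxv, ?_⟩
    rintro _ ⟨⟨c, -, hc, rfl⟩, e, -, he, hce⟩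
    obtain rfl : c = e := congrArg (G.unravel v₀).constOf hce
    change (G.unravel v₀).moveTo s' _ = (G.unravel v₀).moveTo v' _
    rw [hce, Tabloid.moveTo_elem _ he (unravel_consts_congr G v₀ hss ▸ hc),
      Tabloid.moveTo_elem _ he (unravel_consts_congr G v₀ hv'.symm ▸ he)]
    exact (hmirror c hc he _ _).1 hce
  back := by
    rintro _ ⟨s, s', hss, C, rfl⟩ B₁ ⟨-, n, R, x, hR, hB⟩
    obtain ⟨v, hxv⟩ := (G.unravel v₀).exists_elemsAt_of_relMap hR
    obtain ⟨v', hv', hmirror⟩ := exists_mirror G v₀ hss.symm v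
    refine ⟨unravelNodeIso G v₀ hv' Set.univ, ⟨v', v, hv', _, rfl⟩, ?_, ?_⟩
    · intro b hb
      obtain ⟨c, -, hc, rfl⟩ := hxv (hB hb)
      exact ⟨_, ⟨c, trivial, unravel_consts_congr G v₀ hv'.symm ▸ hc, rfl⟩,
        Tabloid.moveTo_elem _ _ hc⟩
    · rintro _ ⟨c, -, hc, rfl⟩ _ ⟨e, -, he, rfl⟩ h
      change (G.unravel v₀).moveTo s' _ = (G.unravel v₀).moveTo v _ at h
      rw [Tabloid.moveTo_elem _ hc (unravel_consts_congr G v₀ hss ▸ hc),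
        Tabloid.moveTo_elem _ he (unravel_consts_congr G v₀ hv' ▸ he)] at h
      obtain rfl : c = e := congrArg (G.unravel v₀).constOf h
      exact (hmirror c _ _ hc he).1 h

end Unravel

theorem finite_gbisim_index_of_unravel_general {L : FirstOrder.Language} [L.IsRelational]
    {K V : Type*} [Finite K] [Finite V]
    (G : Tabloid L K V) (v₀ : V) :
    FiniteGBisimIndex (G.unravel v₀).AT := by
  set U := G.unravel v₀
  have hreps : (⋃ t ∈ Set.range canonNode, U.elemsAt t Set.univ).Finite :=
    finite_range_canonNode.biUnion fun t _ => U.finite_elemsAt t _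
  refine ⟨_, finite_setOf_injective_tuples hreps, fun k a ha => ?_⟩
  obtain ⟨n, R, x, hR, hax⟩ := ha.2.2
  obtain ⟨v, hxv⟩ := U.exists_elemsAt_of_relMap hR
  have hb : IsGuardedTuple U.AT (U.moveTo (canonNode v) ∘ a) :=
    (unravelNodeIso G v₀ (s := v) (s' := canonNode v) rfl Set.univ).isGuardedTuple_comp
      ha hR hax hxv
  refine ⟨_, ⟨hb.1, ?_⟩, hb, unravelGuardedBisim G v₀,
    unravelNodeIso G v₀ (s := v) (s' := canonNode v) rfl (U.constOf '' Set.range a),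
    ⟨v, canonNode v, rfl, _, rfl⟩, U.elemsAt_image_constOf (hax.trans hxv), fun _ => rfl⟩
  rintro _ ⟨j, rfl⟩
  obtain ⟨c, -, hc, hj⟩ := hxv (hax ⟨j, rfl⟩)
  have hc' : c ∈ U.consts (canonNode v) := hc
  exact Set.mem_biUnion ⟨v, rfl⟩ ⟨c, trivial, hc', (congrArg _ hj).trans (U.moveTo_elem hc hc')⟩

/-- **Lemma 2.** Let `G` be a finite tabloid over a finite relational
signature and a finite set of constants, and `T` its undirected unraveling from any node.
Then guarded bisimilarity `∼_g` has finite index on the set of guarded tuples of `𝔄(T)`. -/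
theorem finite_gbisim_index_of_unravel {L : FirstOrder.Language} [L.IsRelational]
    [Finite (Σ n : ℕ, L.Relations n)] {K V : Type*} [Finite K] [Finite V]
    (G : Tabloid L K V) (v₀ : V) :
    FiniteGBisimIndex (G.unravel v₀).AT :=
  finite_gbisim_index_of_unravel_general G v₀

end GFPaper
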